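/- arXiv:2307.16108 — 3 statements merged into one kernel-verified Lean document; each statement's English description precedes it below -/
import Mathlib

section
/- There exist a natural number n₀ and a real number δ₀ > 0 such that for every integer m > n₀ and every real number ε with 0 < ε ≤ δ₀, one has 1 − 4ε/m > (ε/m)^{1/(m−1)}. -/
/-- There exist `n₀ : ℕ` and `δ₀ > 0` such that for every integer
`m > n₀` and every real `ε` with `0 < ε ≤ δ₀`, one has
`1 − 4ε/m > (ε/m)^(1/(m−1))` (real power). -/
theorem interpolation_radius_bound :
    ∃ (n₀ : ℕ) (δ₀ : ℝ), 0 < δ₀ ∧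
      ∀ m : ℕ, n₀ < m → ∀ ε : ℝ, 0 < ε → ε ≤ δ₀ →
        (ε / (m : ℝ)) ^ ((1 : ℝ) / ((m : ℝ) - 1)) < 1 - 4 * ε / (m : ℝ) := by
  refine ⟨1, 1/8, by norm_num, ?_⟩
  intro m hm ε hε hε8
  have hm2 : (2:ℝ) ≤ (m:ℝ) := by exact_mod_cast hm
  have hmpos : (0:ℝ) < (m:ℝ) := by linarith
  have hεm : 0 < ε / (m:ℝ) := div_pos hε hmpos
  set p : ℝ := (m:ℝ) - 1 with hp_def
  have hp : 0 < p := by simp [hp_def]; linarith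
  have hcast : p = ((m - 1 : ℕ) : ℝ) := by
    have : (1:ℕ) ≤ m := le_of_lt hm
    push_cast [Nat.cast_sub this]
    ring
  have hrhs : (0:ℝ) < 1 - 4 * ε / (m:ℝ) := by
    have : 4 * ε / (m:ℝ) ≤ 4 * ε / 2 := by
      apply div_le_div_of_nonneg_left (by linarith) (by norm_num) hm2
    linarith
  have key : ε / (m:ℝ) < (1 - 4 * ε / (m:ℝ)) ^ p := by
    rw [hcast, Real.rpow_natCast]
    have hb : (-2:ℝ) ≤ -(4 * ε / (m:ℝ)) := by
      have : 4 * ε / (m:ℝ) ≤ 4 * ε / 2 := by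
        apply div_le_div_of_nonneg_left (by linarith) (by norm_num) hm2
      linarith
    have bern := one_add_mul_le_pow hb (m - 1)
    have hmn : ((m - 1 : ℕ) : ℝ) = (m:ℝ) - 1 := hcast.symm
    rw [hmn] at bern
    have h1 : 1 + ((m:ℝ) - 1) * -(4 * ε / (m:ℝ)) ≥ 1 - 4 * ε := by
      have : ((m:ℝ) - 1) * (4 * ε / (m:ℝ)) ≤ 4 * ε := by
        rw [mul_div_assoc']
        rw [div_le_iff₀ hmpos]
        nlinarith
      linarith
    have h2 : ε / (m:ℝ) < 1 - 4 * ε := by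
      have : ε / (m:ℝ) ≤ ε / 2 := by
        apply div_le_div_of_nonneg_left (le_of_lt hε) (by norm_num) hm2
      linarith
    calc ε / (m:ℝ) < 1 - 4 * ε := h2
      _ ≤ 1 + ((m:ℝ) - 1) * -(4 * ε / (m:ℝ)) := h1
      _ ≤ (1 + -(4 * ε / (m:ℝ))) ^ (m - 1) := bern
      _ = (1 - 4 * ε / (m:ℝ)) ^ (m - 1) := by ring_nf
  have h := Real.rpow_lt_rpow (le_of_lt hεm) key (by positivity : (0:ℝ) < 1 / p)
  rwa [← Real.rpow_mul (le_of_lt hrhs), mul_one_div, div_self hp.ne', Real.rpow_one] at h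
end

section
/- Fix a real number δ with 0 < δ < 1, and for each integer m ≥ 2 set c_m := (δ/m)^{2/(m−1)}. Then there exists M ∈ ℕ such that for all integers m ≥ M the following hold: (i) c_m^m + δ·c_m < δ·(δ/m)^{1/(m−1)}·(m−1)/m < 1, and (ii) for every z ∈ ℂ with |z| ≤ c_m one has |z^m + δz| ≤ c_m^m + δ·c_m. In particular, for such m, every point z with |z| ≤ c_m is mapped by z ↦ z^m + δz strictly inside the circle of radius equal to the common modulus δ·(δ/m)^{1/(m−1)}·(m−1)/m of the critical values of z ↦ z^m + δz. -/
set_option maxHeartbeats 1000000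


/-- `c_m := (δ/m)^(2/(m−1))` (real power). -/
noncomputable def cm (δ : ℝ) (m : ℕ) : ℝ :=
  (δ / (m : ℝ)) ^ ((2 : ℝ) / ((m : ℝ) - 1))

/-- For `0 < δ < 1` there is `M` so that for all `m ≥ M`:
(i) `c_m^m + δ·c_m < δ·(δ/m)^(1/(m−1))·(m−1)/m < 1`, and
(ii) `|z| ≤ c_m → |z^m + δz| ≤ c_m^m + δ·c_m`.
In particular every `z` with `|z| ≤ c_m` is mapped by `z ↦ z^m + δz` strictly inside
the circle of radius `δ·(δ/m)^(1/(m−1))·(m−1)/m` (the common modulus of the critical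
values of `z ↦ z^m + δz`). -/
theorem disk_mapped_inside_critical_values (δ : ℝ) (h0 : 0 < δ) (h1 : δ < 1) :
    ∃ M : ℕ, ∀ m : ℕ, M ≤ m →
      (cm δ m ^ m + δ * cm δ m
          < δ * (δ / (m : ℝ)) ^ ((1 : ℝ) / ((m : ℝ) - 1)) * ((m : ℝ) - 1) / (m : ℝ) ∧
        δ * (δ / (m : ℝ)) ^ ((1 : ℝ) / ((m : ℝ) - 1)) * ((m : ℝ) - 1) / (m : ℝ) < 1) ∧
      (∀ z : ℂ, ‖z‖ ≤ cm δ m →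
        ‖z ^ m + (δ : ℂ) * z‖ ≤ cm δ m ^ m + δ * cm δ m) ∧
      (∀ z : ℂ, ‖z‖ ≤ cm δ m →
        ‖z ^ m + (δ : ℂ) * z‖
          < δ * (δ / (m : ℝ)) ^ ((1 : ℝ) / ((m : ℝ) - 1)) * ((m : ℝ) - 1) / (m : ℝ)) := by
  refine ⟨21, fun m hm => ?_⟩
  have hmR : (21 : ℝ) ≤ (m : ℝ) := by exact_mod_cast hm
  have hm0 : (0 : ℝ) < (m : ℝ) := by linarith
  have hm1 : (1 : ℝ) ≤ (m : ℝ) - 1 := by linarith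
  have ha0 : 0 < δ / (m : ℝ) := div_pos h0 hm0
  have ha1 : δ / (m : ℝ) < 1 := by rw [div_lt_one hm0]; linarith
  set e1 : ℝ := (1 : ℝ) / ((m : ℝ) - 1) with he1def
  have he1 : 0 < e1 := by positivity
  set t : ℝ := (δ / (m : ℝ)) ^ e1 with ht
  have ht0 : 0 < t := Real.rpow_pos_of_pos ha0 _
  have ht1 : t < 1 := Real.rpow_lt_one ha0.le ha1 he1
  -- cm = t^2
  have hc : cm δ m = t ^ 2 := by
    rw [ht, ← Real.rpow_natCast ((δ / (m : ℝ)) ^ e1) 2, ← Real.rpow_mul ha0.le]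
    simp only [cm]
    congr 1
    rw [he1def]
    push_cast
    ring
  -- cm^m = (δ/m)^2 * t^2
  have hcm : cm δ m ^ m = (δ / (m : ℝ)) ^ 2 * t ^ 2 := by
    simp only [cm]
    rw [← Real.rpow_natCast ((δ / (m : ℝ)) ^ ((2 : ℝ) / ((m : ℝ) - 1))) m,
      ← Real.rpow_mul ha0.le]
    have hexp : (2 : ℝ) / ((m : ℝ) - 1) * (m : ℕ) = 2 + 2 * e1 := by
      rw [he1def]
      have : ((m : ℝ) - 1) ≠ 0 := by linarith
      field_simp
      ring
    rw [hexp, Real.rpow_add ha0, ht,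
      ← Real.rpow_natCast ((δ / (m : ℝ)) ^ e1) 2, ← Real.rpow_mul ha0.le,
      ← Real.rpow_natCast (δ / (m : ℝ)) 2]
    push_cast
    ring_nf
  -- log bound
  have hinv : (21 : ℝ) ≤ 1 / (δ / (m : ℝ)) := by
    rw [one_div_div]
    calc (21 : ℝ) ≤ (m : ℝ) := hmR
      _ ≤ (m : ℝ) / δ := by rw [le_div_iff₀ h0]; nlinarith
  have hexp3 : Real.exp 3 < 21 := by
    have h := Real.exp_one_lt_d9
    have h3 : Real.exp 3 = Real.exp 1 ^ 3 := by
      rw [← Real.exp_nat_mul]; norm_num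
    have hp : Real.exp 1 ^ 3 < 2.7182818286 ^ 3 :=
      pow_lt_pow_left₀ h (Real.exp_pos 1).le (by norm_num)
    rw [h3]; nlinarith
  have hlog3 : (3 : ℝ) ≤ Real.log (1 / (δ / (m : ℝ))) := by
    rw [Real.le_log_iff_exp_le (by positivity)]
    linarith
  set x : ℝ := Real.log (1 / (δ / (m : ℝ))) * e1 with hx
  have he1m : 1 / (m : ℝ) ≤ e1 := by
    rw [he1def]
    apply one_div_le_one_div_of_le (by linarith)
    linarith
  have hx3 : 3 / (m : ℝ) ≤ x := by
    calc 3 / (m : ℝ) = 3 * (1 / (m : ℝ)) := by ring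
      _ ≤ Real.log (1 / (δ / (m : ℝ))) * e1 :=
        mul_le_mul hlog3 he1m (by positivity) (by linarith)
  have hx0 : 0 < x := lt_of_lt_of_le (by positivity) hx3
  have htexp : t = Real.exp (-x) := by
    rw [ht, Real.rpow_def_of_pos ha0, hx, one_div, Real.log_inv]
    ring_nf
  have ht3 : t * (1 + x) ≤ 1 := by
    rw [htexp]
    calc Real.exp (-x) * (1 + x) ≤ Real.exp (-x) * Real.exp x := by
          have := Real.add_one_le_exp x
          nlinarith [Real.exp_pos (-x)]
      _ = 1 := by rw [← Real.exp_add]; simp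
  have hx3' : (3 : ℝ) ≤ x * (m : ℝ) := by
    rw [div_le_iff₀ hm0] at hx3; exact hx3
  clear_value t x e1
  have htm : t * ((m : ℝ) + 3) ≤ (m : ℝ) := by
    nlinarith [mul_le_mul_of_nonneg_left hx3' ht0.le,
      mul_le_mul_of_nonneg_right ht3 hm0.le]
  have hmp : (0 : ℝ) < (m : ℝ) + 3 := by linarith
  have hkey : t * ((m : ℝ) ^ 2 + δ) < ((m : ℝ) - 1) * (m : ℝ) := by
    have h4 : t * ((m : ℝ) ^ 2 + δ) * ((m : ℝ) + 3)
        < ((m : ℝ) - 1) * (m : ℝ) * ((m : ℝ) + 3) := by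
      calc t * ((m : ℝ) ^ 2 + δ) * ((m : ℝ) + 3)
          = t * ((m : ℝ) + 3) * ((m : ℝ) ^ 2 + δ) := by ring
        _ ≤ (m : ℝ) * ((m : ℝ) ^ 2 + δ) :=
            mul_le_mul_of_nonneg_right htm (by positivity)
        _ < ((m : ℝ) - 1) * (m : ℝ) * ((m : ℝ) + 3) := by
            nlinarith [mul_pos hm0 (show (0:ℝ) < 2 * (m:ℝ) - 3 - δ by linarith)]
    exact lt_of_mul_lt_mul_right h4 hmp.le
  have key2 : δ ^ 2 * t ^ 2 + δ * t ^ 2 * (m : ℝ) ^ 2 < δ * t * ((m : ℝ) - 1) * (m : ℝ) := by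
    nlinarith [mul_lt_mul_of_pos_left hkey (mul_pos h0 ht0)]
  have goal1 : cm δ m ^ m + δ * cm δ m < δ * t * ((m : ℝ) - 1) / (m : ℝ) := by
    rw [hcm, hc]
    have hm2 : (0 : ℝ) < (m : ℝ) ^ 2 := by positivity
    rw [show (δ / (m : ℝ)) ^ 2 * t ^ 2 + δ * t ^ 2
          = (δ ^ 2 * t ^ 2 + δ * t ^ 2 * (m : ℝ) ^ 2) / (m : ℝ) ^ 2 by
        field_simp,
      show δ * t * ((m : ℝ) - 1) / (m : ℝ)
          = δ * t * ((m : ℝ) - 1) * (m : ℝ) / (m : ℝ) ^ 2 by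
        field_simp]
    exact (div_lt_div_iff_of_pos_right hm2).mpr key2
  have goal2 : δ * t * ((m : ℝ) - 1) / (m : ℝ) < 1 := by
    rw [div_lt_one hm0]
    nlinarith [mul_pos ht0 (show (0:ℝ) < (m:ℝ) - 1 by linarith), ht1, h1,
      mul_pos h0 ht0]
  have hcnn : 0 ≤ cm δ m := by rw [hc]; positivity
  have goal3 : ∀ z : ℂ, ‖z‖ ≤ cm δ m →
      ‖z ^ m + (δ : ℂ) * z‖ ≤ cm δ m ^ m + δ * cm δ m := by
    intro z hz
    calc ‖z ^ m + (δ : ℂ) * z‖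
        ≤ ‖z ^ m‖ + ‖(δ : ℂ) * z‖ := norm_add_le _ _
      _ = ‖z‖ ^ m + δ * ‖z‖ := by
          rw [norm_pow, norm_mul]; simp [abs_of_pos h0]
      _ ≤ cm δ m ^ m + δ * cm δ m := by
          exact add_le_add (pow_le_pow_left₀ (norm_nonneg z) hz m)
            (mul_le_mul_of_nonneg_left hz h0.le)
  exact ⟨⟨goal1, goal2⟩, goal3, fun z hz => lt_of_le_of_lt (goal3 z hz) goal1⟩
end

section
/- Fix a real number δ with 0 < δ < 1, and for each integer m ≥ 2 set c_m := (δ/m)^{2/(m−1)} and r_{m,δ} := 1 − 4δ/m, and let ι_{m,δ}(z) := z^m + δ·z·η_{r_{m,δ}}(z). Then for every real ε with 0 < ε < 1 there exists M ∈ ℕ such that for all integers m ≥ M and all z ∈ ℂ with |z| ≤ 1 − ε one has |ι_{m,δ}(z)| ≤ (1−ε)^m + δ(1−ε) < c_m^m + δ·c_m. Consequently, for all such m, every z in the closed unit disk with |ι_{m,δ}(z)| > c_m^m + δ·c_m satisfies 1 − ε < |z| ≤ 1. -/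
/-!
Since `0 ≤ η_r ≤ 1`, one has `|ι_{m,δ}(z)| ≤ |z|^m + δ|z|`, so on the disk `|z| ≤ 1 − ε` the
modulus is at most `(1−ε)^m + δ(1−ε)`, which tends to `δ(1−ε)`. On the other hand `c_m → 1`, so
`c_m^m + δ c_m ≥ δ c_m` eventually exceeds `δ(1−ε)`.
-/

/-- The bump function `b(x) = exp(1 + 1/(x²−1))` for `x < 1`, and `b(x) = 0` for `x ≥ 1`. -/
noncomputable def bumpB (x : ℝ) : ℝ :=
  if x < 1 then Real.exp (1 + 1 / (x ^ 2 - 1)) else 0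

/-- `η̂_r(x) = 1` for `x ≤ r`, `= b((x−r)/(1−r))` for `r ≤ x ≤ 1`, and `= 0` for `x ≥ 1`. -/
noncomputable def etaHat (r : ℝ) (x : ℝ) : ℝ :=
  if x ≤ r then 1 else bumpB ((x - r) / (1 - r))

/-- `η_r(z) := η̂_r(|z|)`. -/
noncomputable def eta (r : ℝ) (z : ℂ) : ℝ :=
  etaHat r ‖z‖

/-- The interpolation `ι_{m,δ}(z) := z^m + δ·z·η_{r}(z)` with `r = r_{m,δ} := 1 − 4δ/m`. -/
noncomputable def iota (m : ℕ) (δ : ℝ) (z : ℂ) : ℂ :=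
  z ^ m + (δ : ℂ) * z * ((eta (1 - 4 * δ / (m : ℝ)) z : ℝ) : ℂ)

open Filter Topology

lemma bumpB_nonneg (x : ℝ) : 0 ≤ bumpB x := by
  unfold bumpB
  split_ifs
  exacts [(Real.exp_pos _).le, le_rfl]

lemma bumpB_le_one {x : ℝ} (hx : -1 < x) : bumpB x ≤ 1 := by
  unfold bumpB
  split_ifs with h
  · have hneg : x ^ 2 - 1 < 0 := by nlinarith
    have : 1 / (x ^ 2 - 1) ≤ -1 := by
      rw [div_le_iff_of_neg hneg]
      nlinarith
    rw [Real.exp_le_one_iff]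
    linarith
  · exact zero_le_one

lemma etaHat_nonneg (r x : ℝ) : 0 ≤ etaHat r x := by
  unfold etaHat
  split_ifs
  exacts [zero_le_one, bumpB_nonneg _]

lemma etaHat_le_one {r : ℝ} (hr : r < 1) (x : ℝ) : etaHat r x ≤ 1 := by
  unfold etaHat
  split_ifs with h
  · exact le_rfl
  · have : 0 < (x - r) / (1 - r) := div_pos (by linarith [not_le.mp h]) (by linarith)
    exact bumpB_le_one (by linarith)

lemma norm_iota_le {m : ℕ} {δ : ℝ} (hδ : 0 < δ) (hm : m ≠ 0) (z : ℂ) :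
    ‖iota m δ z‖ ≤ ‖z‖ ^ m + δ * ‖z‖ := by
  have hr : 1 - 4 * δ / (m : ℝ) < 1 := by
    have : 0 < 4 * δ / (m : ℝ) := by positivity
    linarith
  have hη0 := etaHat_nonneg (1 - 4 * δ / (m : ℝ)) ‖z‖
  have hη1 := etaHat_le_one hr ‖z‖
  calc ‖iota m δ z‖
      ≤ ‖z‖ ^ m + δ * ‖z‖ * eta (1 - 4 * δ / (m : ℝ)) z := by
        refine (norm_add_le _ _).trans_eq ?_
        rw [norm_pow, norm_mul, norm_mul, Complex.norm_real, Complex.norm_real,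
          Real.norm_of_nonneg hδ.le, eta, Real.norm_of_nonneg hη0]
    _ ≤ ‖z‖ ^ m + δ * ‖z‖ * 1 := by unfold eta; gcongr
    _ = ‖z‖ ^ m + δ * ‖z‖ := by rw [mul_one]

lemma cm_nonneg {δ : ℝ} (hδ : 0 ≤ δ) (m : ℕ) : 0 ≤ cm δ m :=
  Real.rpow_nonneg (div_nonneg hδ m.cast_nonneg) _

lemma tendsto_div_rpow_div_add_const {c : ℝ} (hc : 0 < c) (a b : ℝ) :
    Tendsto (fun x : ℝ => (c / x) ^ (a / (x + b))) atTop (𝓝 1) := by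
  have hexp : Tendsto (fun x : ℝ => a / (x + b)) atTop (𝓝 0) :=
    tendsto_const_nhds.div_atTop (tendsto_atTop_add_const_right _ b tendsto_id)
  have hnum : Tendsto (fun x : ℝ => c ^ (a / (x + b))) atTop (𝓝 1) := by
    simpa only [Function.comp_def, Real.rpow_zero] using
      (Real.continuousAt_const_rpow hc.ne').tendsto.comp hexp
  have hden : Tendsto (fun x : ℝ => x ^ (a / (x + b))) atTop (𝓝 1) := by
    simpa only [one_mul] using tendsto_rpow_div_mul_add a 1 b zero_ne_one
  refine (div_one (1 : ℝ) ▸ hnum.div hden one_ne_zero).congr' ?_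
  filter_upwards [eventually_gt_atTop 0] with x hx
  rw [Pi.div_apply, Real.div_rpow hc.le hx.le]

lemma tendsto_cm {δ : ℝ} (hδ : 0 < δ) : Tendsto (cm δ) atTop (𝓝 1) := by
  have h := (tendsto_div_rpow_div_add_const hδ 2 (-1)).comp tendsto_natCast_atTop_atTop
  simp only [Function.comp_def, ← sub_eq_add_neg] at h
  exact h

theorem iota_preimage_of_annulus_near_circle_general (δ : ℝ) (h0 : 0 < δ)
    (ε : ℝ) (he0 : 0 < ε) (he1 : ε < 1) :
    ∃ M : ℕ, ∀ m : ℕ, M ≤ m →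
      (∀ z : ℂ, ‖z‖ ≤ 1 - ε →
        ‖iota m δ z‖ ≤ (1 - ε) ^ m + δ * (1 - ε)) ∧
      ((1 - ε) ^ m + δ * (1 - ε) < cm δ m ^ m + δ * cm δ m) ∧
      (∀ z : ℂ, ‖z‖ ≤ 1 →
        cm δ m ^ m + δ * cm δ m < ‖iota m δ z‖ →
        1 - ε < ‖z‖) := by
  have hbound : Tendsto (fun m : ℕ => (1 - ε) ^ m + δ * (1 - ε)) atTop (𝓝 (0 + δ * (1 - ε))) :=
    (tendsto_pow_atTop_nhds_zero_of_lt_one (by linarith) (by linarith)).add_const _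
  have hlt : ∀ᶠ m : ℕ in atTop, (1 - ε) ^ m + δ * (1 - ε) < δ * cm δ m :=
    hbound.eventually_lt (by simpa only [mul_one] using (tendsto_cm h0).const_mul δ)
      (by nlinarith)
  obtain ⟨M, hM⟩ := (hlt.and (eventually_ne_atTop 0)).exists_forall_of_atTop
  refine ⟨M, fun m hm => ?_⟩
  obtain ⟨hlt, hm0⟩ := hM m hm
  have hdisk : ∀ z : ℂ, ‖z‖ ≤ 1 - ε → ‖iota m δ z‖ ≤ (1 - ε) ^ m + δ * (1 - ε) :=
    fun z hz => (norm_iota_le h0 hm0 z).trans (by gcongr)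
  have hgap : (1 - ε) ^ m + δ * (1 - ε) < cm δ m ^ m + δ * cm δ m :=
    hlt.trans_le (le_add_of_nonneg_left (pow_nonneg (cm_nonneg h0.le m) m))
  refine ⟨hdisk, hgap, fun z _ hz => ?_⟩
  by_contra! hz'
  exact ((hdisk z hz').trans hgap.le).not_gt hz

/-- Fix `0 < δ < 1`. For every `0 < ε < 1` there exists `M` such that
for all `m ≥ M` and all `|z| ≤ 1 − ε`, `|ι_{m,δ}(z)| ≤ (1−ε)^m + δ(1−ε) < c_m^m + δ·c_m`.
Consequently every `z` in the closed unit disk with `|ι_{m,δ}(z)| > c_m^m + δ·c_m`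
satisfies `1 − ε < |z| ≤ 1`. -/
theorem iota_preimage_of_annulus_near_circle (δ : ℝ) (h0 : 0 < δ) (h1 : δ < 1)
    (ε : ℝ) (he0 : 0 < ε) (he1 : ε < 1) :
    ∃ M : ℕ, ∀ m : ℕ, M ≤ m →
      (∀ z : ℂ, ‖z‖ ≤ 1 - ε →
        ‖iota m δ z‖ ≤ (1 - ε) ^ m + δ * (1 - ε)) ∧
      ((1 - ε) ^ m + δ * (1 - ε) < cm δ m ^ m + δ * cm δ m) ∧
      (∀ z : ℂ, ‖z‖ ≤ 1 →
        cm δ m ^ m + δ * cm δ m < ‖iota m δ z‖ →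
        1 - ε < ‖z‖) :=
  iota_preimage_of_annulus_near_circle_general δ h0 ε he0 he1
end
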